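/- Let 0 < ρ < r < min(ρ₁,...,ρ_N) and s ∈ (0,∞)^N. Then there exists a constant A > 0 such that for every f analytic on D_{ρ₁,...,ρ_N}, every α ∈ [1,∞)^N ∪ {0}, and every x ∈ D_{ρ,...,ρ}: |f(x)| ≤ A^{λ(α)} · ‖f‖_{α,r,s}, where λ(α) = α₁ + ⋯ + α_N. -/

import Mathlib

/-!
For `B` in the Nagumo set, comparing the series of `f` at `x` with its majorant gives
`|f(x)| ≤ B ∏_d ∑_j r^{-α_d} binom(α_d+j-1, j)^{s_d} (ρ/r)^j`. A single term of the binomial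
series `∑_j binom(α+j-1, j) θ^j = (1-θ)^{-α}` yields `binom(α+j-1, j) ≤ (1-θ)^{-(α+1)} θ^{-j}`;
choosing `θ^{s_d} = √(ρ/r)` turns each factor into a geometric series in `√(ρ/r)`, bounded by
`E_d^{α_d}` with `E_d` independent of `α`. For `α = 0` the norm is the majorant series at
radius `r` itself.
-/

/-- Generalized binomial coefficient `binom(α+j−1, j) = (∏_{i=0}^{j−1}(α+i))/j!`. -/
noncomputable def genBinom (α : ℝ) (j : ℕ) : ℝ :=
  (∏ i ∈ Finset.range j, (α + i)) / (j.factorial : ℝ)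

/-- Taylor coefficients of an analytic function on the polydisc `D_{ρ₁,...,ρ_N}`. -/
def AnalyticCoeffs {N : ℕ} (ρ : Fin N → ℝ) (f : (Fin N → ℕ) → ℂ) : Prop :=
  ∀ r : Fin N → ℝ, (∀ d, 0 ≤ r d) → (∀ d, r d < ρ d) →
    Summable fun J : Fin N → ℕ => ‖f J‖ * ∏ d, r d ^ J d

/-- The majorization set defining the modified Nagumo norm for `α ≠ 0`. -/
def nagumoSet {N : ℕ} (f : (Fin N → ℕ) → ℂ) (α : Fin N → ℝ) (r : ℝ) (s : Fin N → ℝ) :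
    Set ℝ :=
  {A : ℝ | 0 ≤ A ∧ ∀ J : Fin N → ℕ,
    ‖f J‖ ≤ A * ∏ d, r ^ (-(α d)) * genBinom (α d) (J d) ^ s d * (r ^ J d)⁻¹}

open Classical in
/-- The modified Nagumo norm `‖f‖_{α,r,s}`. -/
noncomputable def nagumoNorm {N : ℕ} (f : (Fin N → ℕ) → ℂ) (α : Fin N → ℝ) (r : ℝ)
    (s : Fin N → ℝ) : ℝ :=
  if α = 0 then ∑' J : Fin N → ℕ, ‖f J‖ * r ^ (∑ d, J d)
  else sInf (nagumoSet f α r s)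

/-- The sum of the power series with coefficients `f` at the point `x`. -/
noncomputable def coeffEval {N : ℕ} (f : (Fin N → ℕ) → ℂ) (x : Fin N → ℂ) : ℂ :=
  ∑' J : Fin N → ℕ, f J * ∏ d, x d ^ J d

open Finset

lemma genBinom_nonneg {α : ℝ} (hα : 0 ≤ α) (j : ℕ) : 0 ≤ genBinom α j :=
  div_nonneg (prod_nonneg fun i _ => by positivity) (Nat.cast_nonneg _)

lemma one_le_genBinom {α : ℝ} (hα : 1 ≤ α) (j : ℕ) : 1 ≤ genBinom α j := by
  rw [genBinom, one_le_div (by positivity), ← prod_range_add_one_eq_factorial, Nat.cast_prod]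
  exact prod_le_prod (fun i _ => by positivity) fun i _ => by push_cast; linarith

lemma genBinom_mono {α β : ℝ} (hα : 0 ≤ α) (hαβ : α ≤ β) (j : ℕ) :
    genBinom α j ≤ genBinom β j := by
  unfold genBinom
  gcongr

lemma genBinom_natCast_add_one (m j : ℕ) : genBinom (m + 1) j = (j + m).choose m := by
  have hasc : ∏ i ∈ range j, ((m : ℝ) + 1 + i) = (m + 1).ascFactorial j := by
    rw [Nat.ascFactorial_eq_prod_range, Nat.cast_prod]
    exact prod_congr rfl fun i _ => by push_cast; ring
  rw [genBinom, hasc, Nat.ascFactorial_eq_factorial_mul_choose, add_comm j m,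
    Nat.choose_symm_add]
  push_cast
  field_simp

/-- The binomial series is summed at the integer `⌊α⌋ + 1 ≥ α`, whence the exponent `α + 1`. -/
lemma genBinom_mul_pow_le {α θ : ℝ} (hα : 0 ≤ α) (hθ0 : 0 ≤ θ) (hθ1 : θ < 1) (j : ℕ) :
    genBinom α j * θ ^ j ≤ (1 - θ)⁻¹ ^ (α + 1) := by
  set m := ⌊α⌋₊
  have hθ : ‖θ‖ < 1 := by rwa [Real.norm_of_nonneg hθ0]
  calc genBinom α j * θ ^ j ≤ genBinom (m + 1) j * θ ^ j := by
        gcongr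
        exact genBinom_mono hα (Nat.lt_floor_add_one α).le j
    _ = (j + m).choose m * θ ^ j := by rw [genBinom_natCast_add_one]
    _ ≤ ∑' k, (k + m).choose m * θ ^ k :=
        (summable_choose_mul_geometric_of_norm_lt_one m hθ).le_tsum j fun k _ => by positivity
    _ = (1 - θ)⁻¹ ^ ((m : ℝ) + 1) := by
        rw [tsum_choose_mul_geometric_of_norm_lt_one m hθ, one_div, ← inv_pow]
        norm_cast
    _ ≤ (1 - θ)⁻¹ ^ (α + 1) := by
        refine Real.rpow_le_rpow_of_exponent_le (one_le_inv₀ (by linarith) |>.2 (by linarith)) ?_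
        linarith [Nat.floor_le hα]

/-- The `j`-th coefficient of `r^{-α} Θ_{α,s}(x/r)`. -/
noncomputable def nagumoWeight (α r s : ℝ) (j : ℕ) : ℝ :=
  r ^ (-α) * genBinom α j ^ s * (r ^ j)⁻¹

lemma nagumoWeight_nonneg {α r : ℝ} (hα : 0 ≤ α) (hr : 0 < r) (s : ℝ) (j : ℕ) :
    0 ≤ nagumoWeight α r s j := by
  have := genBinom_nonneg hα j
  unfold nagumoWeight
  positivity

lemma genBinom_rpow_mul_pow_le {α θ s t : ℝ} (hα : 0 ≤ α) (hθ0 : 0 < θ) (hθ1 : θ < 1)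
    (hs : 0 ≤ s) (ht : 0 ≤ t) (j : ℕ) :
    genBinom α j ^ s * t ^ j ≤ ((1 - θ)⁻¹ ^ s) ^ (α + 1) * (t / θ ^ s) ^ j := by
  have hK : 0 ≤ (1 - θ)⁻¹ := by simpa using hθ1.le
  have := genBinom_nonneg hα j
  calc genBinom α j ^ s * t ^ j = (genBinom α j * θ ^ j) ^ s * (t / θ ^ s) ^ j := by
        rw [Real.mul_rpow this (by positivity), ← Real.rpow_pow_comm hθ0.le, div_pow]
        field_simp
    _ ≤ ((1 - θ)⁻¹ ^ (α + 1)) ^ s * (t / θ ^ s) ^ j := by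
        gcongr
        exact genBinom_mul_pow_le hα hθ0.le hθ1 j
    _ = ((1 - θ)⁻¹ ^ s) ^ (α + 1) * (t / θ ^ s) ^ j := by
        rw [← Real.rpow_mul hK, mul_comm (α + 1), Real.rpow_mul hK]

lemma rpow_neg_mul_rpow_add_one_mul_le {r K c α : ℝ} (hr : 0 < r) (hK : 1 ≤ K) (hc : 1 ≤ c)
    (hα : 1 ≤ α) : r ^ (-α) * K ^ (α + 1) * c ≤ (max 1 r⁻¹ * K ^ 2 * c) ^ α := by
  have hL : 1 ≤ max 1 r⁻¹ := le_max_left _ _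
  rw [Real.mul_rpow (by positivity) (by positivity), Real.mul_rpow (by positivity) (by positivity)]
  gcongr ?_ * ?_ * ?_
  · rw [Real.rpow_neg hr.le, ← Real.inv_rpow hr.le]
    gcongr
    exact le_max_right _ _
  · rw [← Real.rpow_natCast_mul (by positivity)]
    push_cast
    exact Real.rpow_le_rpow_of_exponent_le hK (by linarith)
  · exact Real.self_le_rpow_of_one_le hc hα

lemma exists_sum_nagumoWeight_mul_pow_le {ρ r s : ℝ} (hρ : 0 < ρ) (hρr : ρ < r) (hs : 0 < s) :
    ∃ E, 1 ≤ E ∧ ∀ α, 1 ≤ α → ∀ S : Finset ℕ, ∑ j ∈ S, nagumoWeight α r s j * ρ ^ j ≤ E ^ α := by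
  have hr : 0 < r := hρ.trans hρr
  set t := ρ / r
  have ht0 : 0 < t := by positivity
  have ht1 : t < 1 := (div_lt_one hr).2 hρr
  -- `θ` is chosen with `θ ^ s = √t`, so that the ratio `t / θ ^ s = √t` stays below `1`.
  set u := √t
  have hu0 : 0 < u := Real.sqrt_pos.2 ht0
  have hu1 : u < 1 := (Real.sqrt_lt' one_pos).2 (by rwa [one_pow])
  set θ := u ^ s⁻¹
  have hθ0 : 0 < θ := by positivity
  have hθ1 : θ < 1 := Real.rpow_lt_one hu0.le hu1 (inv_pos.2 hs)
  have hθs : t / θ ^ s = u := by rw [Real.rpow_inv_rpow hu0.le hs.ne', Real.div_sqrt]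
  set K := (1 - θ)⁻¹ ^ s
  have hK : 1 ≤ K := Real.one_le_rpow ((one_le_inv₀ (by linarith)).2 (by linarith)) hs.le
  have hc : 1 ≤ (1 - u)⁻¹ := (one_le_inv₀ (by linarith)).2 (by linarith)
  refine ⟨max 1 r⁻¹ * K ^ 2 * (1 - u)⁻¹, ?_, fun α hα S => ?_⟩
  · exact one_le_mul_of_one_le_of_one_le
      (one_le_mul_of_one_le_of_one_le (le_max_left _ _) (one_le_pow₀ hK)) hc
  calc ∑ j ∈ S, nagumoWeight α r s j * ρ ^ j = r ^ (-α) * ∑ j ∈ S, genBinom α j ^ s * t ^ j := by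
        rw [mul_sum]
        refine sum_congr rfl fun j _ => ?_
        rw [nagumoWeight, div_pow]
        ring
    _ ≤ r ^ (-α) * ∑ j ∈ S, K ^ (α + 1) * u ^ j := by
        gcongr _ * ∑ j ∈ S, ?_ with j
        simpa only [hθs] using genBinom_rpow_mul_pow_le (by linarith) hθ0 hθ1 hs.le ht0.le j
    _ = r ^ (-α) * K ^ (α + 1) * ∑ j ∈ S, u ^ j := by rw [← mul_sum, mul_assoc]
    _ ≤ r ^ (-α) * K ^ (α + 1) * (1 - u)⁻¹ := by
        gcongr
        rw [← tsum_geometric_of_lt_one hu0.le hu1]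
        exact (summable_geometric_of_lt_one hu0.le hu1).sum_le_tsum S fun j _ => by positivity
    _ ≤ _ := rpow_neg_mul_rpow_add_one_mul_le hr hK hc hα

lemma mem_nagumoSet_iff {N : ℕ} {f : (Fin N → ℕ) → ℂ} {α s : Fin N → ℝ} {r A : ℝ} :
    A ∈ nagumoSet f α r s ↔
      0 ≤ A ∧ ∀ J : Fin N → ℕ, ‖f J‖ ≤ A * ∏ d, nagumoWeight (α d) r (s d) (J d) :=
  Iff.rfl

lemma nagumoSet_nonempty {N : ℕ} {f : (Fin N → ℕ) → ℂ} {α s : Fin N → ℝ} {r : ℝ} (hr : 0 < r)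
    (hα : ∀ d, 1 ≤ α d) (hs : ∀ d, 0 ≤ s d)
    (hf : Summable fun J : Fin N → ℕ => ‖f J‖ * r ^ ∑ d, J d) :
    (nagumoSet f α r s).Nonempty := by
  set C := ∑' J, ‖f J‖ * r ^ ∑ d, J d
  have hC : 0 ≤ C := tsum_nonneg fun J => by positivity
  refine ⟨C * r ^ ∑ d, α d, mem_nagumoSet_iff.2 ⟨by positivity, fun J => ?_⟩⟩
  have hrpow : r ^ (∑ d, α d) * ∏ d, r ^ (-α d) * (r ^ J d)⁻¹ = (r ^ ∑ d, J d)⁻¹ := by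
    rw [prod_mul_distrib, ← Real.rpow_sum_of_pos hr, prod_inv_distrib, prod_pow_eq_pow_sum,
      ← mul_assoc, ← Real.rpow_add hr, sum_neg_distrib, add_neg_cancel, Real.rpow_zero, one_mul]
  calc ‖f J‖ ≤ C * (r ^ ∑ d, J d)⁻¹ := by
        rw [← div_eq_mul_inv, le_div_iff₀ (by positivity)]
        exact hf.le_tsum J fun _ _ => by positivity
    _ = C * r ^ (∑ d, α d) * ∏ d, r ^ (-α d) * 1 * (r ^ J d)⁻¹ := by
        simp only [mul_one]
        rw [mul_assoc, hrpow]
    _ ≤ C * r ^ (∑ d, α d) * ∏ d, nagumoWeight (α d) r (s d) (J d) := by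
        gcongr with d
        rw [nagumoWeight]
        gcongr
        exact Real.one_le_rpow (one_le_genBinom (hα d) _) (hs d)

lemma sum_prod_le_prod_of_sum_le {ι : Type*} [Fintype ι] {g : ι → ℕ → ℝ}
    (hg : ∀ i j, 0 ≤ g i j) {M : ι → ℝ} (hM : ∀ i (S : Finset ℕ), ∑ j ∈ S, g i j ≤ M i)
    (F : Finset (ι → ℕ)) : ∑ J ∈ F, ∏ i, g i (J i) ≤ ∏ i, M i := by
  classical
  calc ∑ J ∈ F, ∏ i, g i (J i)
      ≤ ∑ J ∈ Fintype.piFinset fun i => F.image (· i), ∏ i, g i (J i) :=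
        sum_le_sum_of_subset_of_nonneg
          (fun J hJ => Fintype.mem_piFinset.2 fun i => mem_image_of_mem _ hJ)
          fun J _ _ => prod_nonneg fun i _ => hg i (J i)
    _ = ∏ i, ∑ j ∈ F.image (· i), g i j := (prod_univ_sum _ _).symm
    _ ≤ ∏ i, M i := prod_le_prod (fun i _ => sum_nonneg fun j _ => hg i j) fun i _ => hM i _

lemma norm_coeffEval_le_tsum {N : ℕ} {f : (Fin N → ℕ) → ℂ} {x : Fin N → ℂ}
    (h : Summable fun J : Fin N → ℕ => ‖f J‖ * ∏ d, ‖x d‖ ^ J d) :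
    ‖coeffEval f x‖ ≤ ∑' J, ‖f J‖ * ∏ d, ‖x d‖ ^ J d := by
  have hnorm : ∀ J, ‖f J * ∏ d, x d ^ J d‖ = ‖f J‖ * ∏ d, ‖x d‖ ^ J d := by
    simp [norm_prod]
  simpa only [coeffEval, hnorm] using norm_tsum_le_tsum_norm (h.congr fun J => (hnorm J).symm)

lemma norm_coeffEval_le_prod_mul_of_mem_nagumoSet {N : ℕ} {f : (Fin N → ℕ) → ℂ}
    {α s : Fin N → ℝ} {r ρ B : ℝ} {M : Fin N → ℝ} {x : Fin N → ℂ} (hα : ∀ d, 0 ≤ α d)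
    (hr : 0 < r) (hx : ∀ d, ‖x d‖ ≤ ρ)
    (hM : ∀ d (S : Finset ℕ), ∑ j ∈ S, nagumoWeight (α d) r (s d) j * ρ ^ j ≤ M d)
    (hsum : Summable fun J : Fin N → ℕ => ‖f J‖ * ∏ d, ‖x d‖ ^ J d)
    (hB : B ∈ nagumoSet f α r s) :
    ‖coeffEval f x‖ ≤ (∏ d, M d) * B := by
  obtain ⟨hB0, hBf⟩ := mem_nagumoSet_iff.1 hB
  have hw : ∀ d j, 0 ≤ nagumoWeight (α d) r (s d) j := fun d j => nagumoWeight_nonneg (hα d) hr _ _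
  have hg : ∀ d j, 0 ≤ nagumoWeight (α d) r (s d) j * ρ ^ j := fun d j =>
    mul_nonneg (hw d j) (pow_nonneg ((norm_nonneg _).trans (hx d)) _)
  have hM0 : ∀ d, 0 ≤ M d := fun d => by simpa using hM d ∅
  refine (norm_coeffEval_le_tsum hsum).trans <|
    tsum_le_of_sum_le' (mul_nonneg (prod_nonneg fun d _ => hM0 d) hB0) fun F => ?_
  calc ∑ J ∈ F, ‖f J‖ * ∏ d, ‖x d‖ ^ J d
      ≤ ∑ J ∈ F, B * ∏ d, nagumoWeight (α d) r (s d) (J d) * ρ ^ J d := by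
        refine sum_le_sum fun J _ => ?_
        rw [prod_mul_distrib, ← mul_assoc]
        exact mul_le_mul (hBf J)
          (prod_le_prod (fun _ _ => by positivity) fun d _ => pow_le_pow_left₀ (by positivity) (hx d) _)
          (by positivity) (mul_nonneg hB0 (prod_nonneg fun d _ => hw d _))
    _ = B * ∑ J ∈ F, ∏ d, nagumoWeight (α d) r (s d) (J d) * ρ ^ J d := by rw [mul_sum]
    _ ≤ B * ∏ d, M d := by
        gcongr
        exact sum_prod_le_prod_of_sum_le hg hM F
    _ = (∏ d, M d) * B := mul_comm _ _

theorem sup_le_nagumoNorm_general (N : ℕ) (Ρ : Fin N → ℝ)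
    (ρ r : ℝ) (hρ : 0 < ρ) (hρr : ρ < r) (hrΡ : ∀ d, r < Ρ d)
    (s : Fin N → ℝ) (hs : ∀ d, 0 < s d) :
    ∃ A : ℝ, 0 < A ∧
      ∀ f : (Fin N → ℕ) → ℂ, AnalyticCoeffs Ρ f →
      ∀ α : Fin N → ℝ, ((∀ d, 1 ≤ α d) ∨ α = 0) →
      ∀ x : Fin N → ℂ, (∀ d, ‖x d‖ < ρ) →
        ‖coeffEval f x‖ ≤ A ^ (∑ d, α d) * nagumoNorm f α r s := by
  have hr : 0 < r := hρ.trans hρr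
  choose E hE1 hE using fun d => exists_sum_nagumoWeight_mul_pow_le hρ hρr (hs d)
  obtain ⟨A, hA1, hEA⟩ : ∃ A, 1 ≤ A ∧ ∀ d, E d ≤ A :=
    ⟨max 1 (∑ d, E d), le_max_left _ _, fun d =>
      (single_le_sum (fun d _ => by linarith [hE1 d]) (mem_univ d)).trans (le_max_right _ _)⟩
  have hA : 0 < A := by linarith
  refine ⟨A, hA, fun f hf α hα x hx => ?_⟩
  have hsumx : Summable fun J : Fin N → ℕ => ‖f J‖ * ∏ d, ‖x d‖ ^ J d :=
    hf _ (fun d => norm_nonneg _) fun d => (hx d).trans (hρr.trans (hrΡ d))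
  have hsumr : Summable fun J : Fin N → ℕ => ‖f J‖ * r ^ ∑ d, J d := by
    simpa only [prod_pow_eq_pow_sum] using hf (fun _ => r) (fun _ => hr.le) hrΡ
  by_cases hα0 : α = 0
  · subst hα0
    simp only [nagumoNorm, if_pos, Pi.zero_apply, sum_const_zero, Real.rpow_zero, one_mul]
    refine (norm_coeffEval_le_tsum hsumx).trans (hsumx.tsum_le_tsum (fun J => ?_) hsumr)
    rw [← prod_pow_eq_pow_sum]
    gcongr with d
    exact ((hx d).trans hρr).le
  · have hα1 := hα.resolve_right hα0
    rw [nagumoNorm, if_neg hα0, ← div_le_iff₀' (by positivity)]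
    refine le_csInf (nagumoSet_nonempty hr hα1 (fun d => (hs d).le) hsumr) fun B hB => ?_
    rw [div_le_iff₀' (by positivity), Real.rpow_sum_of_pos hA]
    refine norm_coeffEval_le_prod_mul_of_mem_nagumoSet (fun d => by linarith [hα1 d]) hr
      (fun d => (hx d).le) (fun d S => ?_) hsumx hB
    exact (hE d _ (hα1 d) S).trans (Real.rpow_le_rpow (by linarith [hE1 d]) (hEA d) (by linarith [hα1 d]))

/-- Let `0 < ρ < r < min(ρ₁,...,ρ_N)` and `s ∈ (0,∞)^N`.  Then there is `A > 0` such that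
for every `f` analytic on `D_{ρ₁,...,ρ_N}`, every `α ∈ [1,∞)^N ∪ {0}` and every
`x ∈ D_{ρ,...,ρ}`: `|f(x)| ≤ A^{λ(α)} · ‖f‖_{α,r,s}`, where `λ(α) = α₁ + ⋯ + α_N`. -/
theorem sup_le_nagumoNorm (N : ℕ) (Ρ : Fin N → ℝ) (hΡ : ∀ d, 0 < Ρ d)
    (ρ r : ℝ) (hρ : 0 < ρ) (hρr : ρ < r) (hrΡ : ∀ d, r < Ρ d)
    (s : Fin N → ℝ) (hs : ∀ d, 0 < s d) :
    ∃ A : ℝ, 0 < A ∧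
      ∀ f : (Fin N → ℕ) → ℂ, AnalyticCoeffs Ρ f →
      ∀ α : Fin N → ℝ, ((∀ d, 1 ≤ α d) ∨ α = 0) →
      ∀ x : Fin N → ℂ, (∀ d, ‖x d‖ < ρ) →
        ‖coeffEval f x‖ ≤ A ^ (∑ d, α d) * nagumoNorm f α r s :=
  sup_le_nagumoNorm_general N Ρ ρ r hρ hρr hrΡ s hs
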